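/- Let n ≥ 2, 1 < α < n, and let g : S^{n-1} → C be a measurable function satisfying g(cos t, (sin t)ω̃) = g(0, ω̃) for all 0 ≤ t ≤ π and ω̃ ∈ S^{n-2}. Then the function ω ↦ |ω'|^{α-n} g(ω) (where ω = (ω^{(1)}, ω') with ω' ∈ R^{n-1}) belongs to weak-L^{(n-1)/(n-α)}(S^{n-1}) with ‖ |ω'|^{α-n} g(ω) ‖_{L^{(n-1)/(n-α),∞}(S^{n-1})} ≤ C ( ∫_{S^{n-2}} |g(0,ω̃)|^{(n-1)/(n-α)} dω̃ )^{(n-α)/(n-1)}. -/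

import Mathlib

open MeasureTheory Metric Set Real
open scoped ENNReal Pointwise

/-!
Write `δ = n - α`, `p = (n - 1) / δ` and `G θ = |g (0, θ)|`. By the symmetry of `g`,
`|g ω| = G (ω' / |ω'|)`, so `ω` lies in the level set `{|ω'| ^ (-δ) |g ω| > l}` exactly when
`|ω'| < (G (ω' / |ω'|) / l) ^ (1 / δ)`. The cone of radii `(0, 1)` over the level set is then
contained in the cylinder `[-1, 1] × B`, where `B ⊆ ℝⁿ⁻¹` is the star-shaped region below the
radial function `(G / l) ^ (1 / δ)`; in polar coordinates `|B| = (n - 1)⁻¹ l ^ (-p) ∫ G ^ p`.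
Hence the level set has measure at most `2n / (n - 1) · l ^ (-p) ∫ G ^ p`, which is the weak
`L^p` bound.
-/

/-- The last `m` coordinates of a vector in `ℝ^{m+1}`. -/
def euclideanTail (m : ℕ) (ω : EuclideanSpace ℝ (Fin (m + 1))) :
    EuclideanSpace ℝ (Fin m) := WithLp.toLp 2 (fun i : Fin m => ω i.succ)

theorem MeasureTheory.Measure.volumeIoiPow_setOf_lt (n : ℕ) {r : ℝ} (hr : 0 ≤ r) :
    Measure.volumeIoiPow n {s | s.1 < r} = ENNReal.ofReal (r ^ (n + 1) / (n + 1)) := by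
  rcases hr.eq_or_lt with rfl | hr
  · simp [fun s : Ioi (0 : ℝ) => not_lt.2 (le_of_lt (mem_Ioi.1 s.2))]
  · exact Measure.volumeIoiPow_apply_Iio n ⟨r, hr⟩

section AddHaar

variable {E : Type*} [NormedAddCommGroup E] [NormedSpace ℝ E] [FiniteDimensional ℝ E]
  [MeasurableSpace E] [BorelSpace E] [Nontrivial E] (μ : Measure E) [μ.IsAddHaarMeasure]

theorem MeasureTheory.Measure.addHaar_setOf_norm_lt_radial {R : E → ℝ} (hR : Measurable R) (hR0 : 0 ≤ R) :
    μ {x | x ≠ 0 ∧ ‖x‖ < R (‖x‖⁻¹ • x)} =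
      ∫⁻ θ : sphere (0 : E) 1,
        ENNReal.ofReal (R θ ^ Module.finrank ℝ E / Module.finrank ℝ E) ∂μ.toSphere := by
  set B := {x : E | x ≠ 0 ∧ ‖x‖ < R (‖x‖⁻¹ • x)}
  set A : Set (sphere (0 : E) 1 × Ioi (0 : ℝ)) := {p | p.2.1 < R p.1}
  have hA : MeasurableSet A :=
    measurableSet_lt (measurable_subtype_coe.comp measurable_snd)
      (hR.comp (measurable_subtype_coe.comp measurable_fst))
  have hpreimage : ((↑) : ({0}ᶜ : Set E) → E) ⁻¹' B = homeomorphUnitSphereProd E ⁻¹' A := by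
    ext x
    simp [A, B, show (x : E) ≠ 0 from x.2]
  have hdim : Module.finrank ℝ E - 1 + 1 = Module.finrank ℝ E :=
    Nat.sub_add_cancel Module.finrank_pos
  have hcomap : μ B = μ.comap (↑) (((↑) : ({0}ᶜ : Set E) → E) ⁻¹' B) := by
    rw [comap_subtype_coe_apply (measurableSet_singleton 0).compl, Subtype.image_preimage_coe,
      inter_eq_self_of_subset_right fun x hx => hx.1]
  rw [hcomap, hpreimage, (μ.measurePreserving_homeomorphUnitSphereProd).measure_preimage
      hA.nullMeasurableSet, Measure.prod_apply hA]
  refine lintegral_congr fun θ => ?_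
  rw [show Prod.mk θ ⁻¹' A = {s | s.1 < R θ} from rfl,
    Measure.volumeIoiPow_setOf_lt _ (hR0 θ), hdim]
  push_cast [Nat.cast_sub Module.finrank_pos]
  ring_nf

theorem MeasureTheory.Measure.addHaar_setOf_norm_lt_div_rpow_inv {G : E → ℝ} (hG : Measurable G) (hG0 : 0 ≤ G) {δ l : ℝ} (hδ : 0 < δ) (hl : 0 < l) :
    μ {x | x ≠ 0 ∧ ‖x‖ < (G (‖x‖⁻¹ • x) / l) ^ δ⁻¹} =
      ENNReal.ofReal ((Module.finrank ℝ E * l ^ (Module.finrank ℝ E / δ))⁻¹) *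
        ∫⁻ θ : sphere (0 : E) 1, ENNReal.ofReal (G θ) ^ (Module.finrank ℝ E / δ) ∂μ.toSphere := by
  rw [μ.addHaar_setOf_norm_lt_radial (by fun_prop)
      fun x => rpow_nonneg (div_nonneg (hG0 x) hl.le) _,
    ← lintegral_const_mul' _ _ ENNReal.ofReal_ne_top]
  refine lintegral_congr fun θ => ?_
  have hGθ : 0 ≤ G θ := hG0 θ
  rw [ENNReal.ofReal_rpow_of_nonneg hGθ (by positivity), ← ENNReal.ofReal_mul (by positivity),
    ← rpow_natCast, ← rpow_mul (div_nonneg hGθ hl.le), inv_mul_eq_div, div_rpow hGθ hl.le]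
  congr 1
  ring

end AddHaar

theorem lt_rpow_inv_of_lt_rpow_neg_mul {a b l δ : ℝ} (ha : 0 < a) (hl : 0 < l) (hδ : 0 < δ)
    (h : l < a ^ (-δ) * b) : a < (b / l) ^ δ⁻¹ := by
  rw [rpow_neg ha.le, lt_inv_mul_iff₀ (rpow_pos_of_pos ha δ)] at h
  have hb : 0 ≤ b := by nlinarith [rpow_pos_of_pos ha δ]
  rwa [lt_rpow_inv_iff_of_pos ha.le (div_nonneg hb hl.le) hδ, lt_div_iff₀ hl]

theorem ENNReal.ofReal_mul_rpow_le_of_le_ofReal_div_rpow_mul {σ I : ℝ≥0∞} {a l p q : ℝ}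
    (ha : 0 ≤ a) (hl : 0 < l) (hq : 0 ≤ q) (hpq : p * q = 1)
    (h : σ ≤ ENNReal.ofReal (a / l ^ p) * I) :
    ENNReal.ofReal l * σ ^ q ≤ ENNReal.ofReal (a ^ q) * I ^ q := by
  have hscale : l * (a / l ^ p) ^ q = a ^ q := by
    rw [Real.div_rpow ha (Real.rpow_nonneg hl.le p), ← Real.rpow_mul hl.le, hpq, Real.rpow_one,
      mul_div_cancel₀ _ hl.ne']
  calc ENNReal.ofReal l * σ ^ q ≤ ENNReal.ofReal l * (ENNReal.ofReal (a / l ^ p) * I) ^ q := by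
        gcongr
    _ = ENNReal.ofReal (a ^ q) * I ^ q := by
        rw [ENNReal.mul_rpow_of_nonneg _ _ hq, ENNReal.ofReal_rpow_of_nonneg (by positivity) hq,
          ← mul_assoc, ← ENNReal.ofReal_mul hl.le, hscale]

@[fun_prop]
theorem measurable_euclideanTail (m : ℕ) : Measurable (euclideanTail m) := by
  unfold euclideanTail
  fun_prop

theorem euclideanTail_smul (m : ℕ) (c : ℝ) (x : EuclideanSpace ℝ (Fin (m + 1))) :
    euclideanTail m (c • x) = c • euclideanTail m x := rfl

theorem norm_sq_eq_sq_add_norm_euclideanTail_sq (m : ℕ) (x : EuclideanSpace ℝ (Fin (m + 1))) :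
    ‖x‖ ^ 2 = x 0 ^ 2 + ‖euclideanTail m x‖ ^ 2 := by
  simp [EuclideanSpace.norm_sq_eq, Fin.sum_univ_succ, euclideanTail]

theorem measurePreserving_head_euclideanTail (m : ℕ) :
    MeasurePreserving (fun x : EuclideanSpace ℝ (Fin (m + 1)) => (x 0, euclideanTail m x))
      volume (volume.prod volume) :=
  ((MeasurePreserving.id volume).prod (PiLp.volume_preserving_toLp (Fin m))).comp <|
    (volume_preserving_piFinSuccAbove (fun _ : Fin (m + 1) => ℝ) 0).comp
      (PiLp.volume_preserving_ofLp (Fin (m + 1)))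

theorem volume_setOf_head_mem_euclideanTail_mem (m : ℕ) {I : Set ℝ}
    {B : Set (EuclideanSpace ℝ (Fin m))} (hI : MeasurableSet I) (hB : MeasurableSet B) :
    volume {x : EuclideanSpace ℝ (Fin (m + 1)) | x 0 ∈ I ∧ euclideanTail m x ∈ B} =
      volume I * volume B := by
  rw [← Measure.prod_prod]
  exact (measurePreserving_head_euclideanTail m).measure_preimage (hI.prod hB).nullMeasurableSet

theorem toSphere_le_of_forall_smul_euclideanTail_mem (m : ℕ)
    {S : Set (sphere (0 : EuclideanSpace ℝ (Fin (m + 1))) 1)} {B : Set (EuclideanSpace ℝ (Fin m))}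
    (hS : MeasurableSet S) (hB : MeasurableSet B)
    (hSB : ∀ ω ∈ S, ∀ c ∈ Ioo (0 : ℝ) 1, c • euclideanTail m ω ∈ B) :
    (volume : Measure (EuclideanSpace ℝ (Fin (m + 1)))).toSphere S ≤ 2 * (m + 1) * volume B := by
  have hcone : Ioo (0 : ℝ) 1 • ((↑) '' S) ⊆
      {x : EuclideanSpace ℝ (Fin (m + 1)) | x 0 ∈ Icc (-1) 1 ∧ euclideanTail m x ∈ B} := by
    rintro _ ⟨c, hc, _, ⟨ω, hω, rfl⟩, rfl⟩
    have hω0 : |(ω : EuclideanSpace ℝ (Fin (m + 1))) 0| ≤ 1 :=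
      (PiLp.norm_apply_le _ 0).trans (norm_eq_of_mem_sphere ω).le
    refine ⟨?_, by rw [euclideanTail_smul]; exact hSB ω hω c hc⟩
    rw [PiLp.smul_apply, smul_eq_mul, mem_Icc, ← abs_le, abs_mul, abs_of_pos hc.1]
    exact mul_le_one₀ hc.2.le (abs_nonneg _) hω0
  calc (volume : Measure (EuclideanSpace ℝ (Fin (m + 1)))).toSphere S
      ≤ (m + 1) * volume {x : EuclideanSpace ℝ (Fin (m + 1)) |
          x 0 ∈ Icc (-1) 1 ∧ euclideanTail m x ∈ B} := by
        rw [Measure.toSphere_apply' _ hS, finrank_euclideanSpace_fin]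
        push_cast
        gcongr
    _ = 2 * (m + 1) * volume B := by
        rw [volume_setOf_head_mem_euclideanTail_mem m measurableSet_Icc hB, Real.volume_Icc]
        norm_num
        ring

theorem eq_cons_cos_sin_of_norm_eq_one {m : ℕ} {ω : EuclideanSpace ℝ (Fin (m + 1))}
    (hω : ‖ω‖ = 1) (hne : euclideanTail m ω ≠ 0) :
    WithLp.toLp 2 (Fin.cons (cos (arccos (ω 0)))
      (fun i => sin (arccos (ω 0)) * (‖euclideanTail m ω‖⁻¹ • euclideanTail m ω) i) :
        Fin (m + 1) → ℝ) = ω := by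
  set w := euclideanTail m ω
  have hw : 0 < ‖w‖ := norm_pos_iff.2 hne
  have hsq : ω 0 ^ 2 + ‖w‖ ^ 2 = 1 := by
    rw [← norm_sq_eq_sq_add_norm_euclideanTail_sq, hω, one_pow]
  have hsin : sin (arccos (ω 0)) = ‖w‖ := by
    rw [sin_arccos, show 1 - ω 0 ^ 2 = ‖w‖ ^ 2 by linarith, sqrt_sq hw.le]
  have hcos : cos (arccos (ω 0)) = ω 0 := cos_arccos (by nlinarith) (by nlinarith)
  ext i
  refine Fin.cases ?_ (fun j => ?_) i
  · simp [hcos]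
  · simp only [Fin.cons_succ, hsin, PiLp.smul_apply, smul_eq_mul, ← mul_assoc,
      mul_inv_cancel₀ hw.ne', one_mul]
    rfl

theorem apply_eq_apply_cons_zero_of_norm_eq_one {m : ℕ} {X : Type*}
    {g : EuclideanSpace ℝ (Fin (m + 1)) → X}
    (hsym : ∀ t ∈ Icc (0 : ℝ) π, ∀ θ : EuclideanSpace ℝ (Fin m), ‖θ‖ = 1 →
        g (WithLp.toLp 2 (Fin.cons (cos t) (fun i => sin t * θ i) : Fin (m + 1) → ℝ)) =
          g (WithLp.toLp 2 (Fin.cons 0 (fun i => θ i) : Fin (m + 1) → ℝ)))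
    {ω : EuclideanSpace ℝ (Fin (m + 1))} (hω : ‖ω‖ = 1) (hne : euclideanTail m ω ≠ 0) :
    g ω = g (WithLp.toLp 2 (Fin.cons 0
      (fun i => (‖euclideanTail m ω‖⁻¹ • euclideanTail m ω) i) : Fin (m + 1) → ℝ)) := by
  have hθ : ‖‖euclideanTail m ω‖⁻¹ • euclideanTail m ω‖ = 1 := norm_smul_inv_norm hne
  rw [← hsym _ ⟨arccos_nonneg _, arccos_le_pi _⟩ _ hθ, eq_cons_cos_sin_of_norm_eq_one hω hne]

theorem smul_euclideanTail_mem_of_lt_rpow_neg_mul {m : ℕ} {δ l : ℝ} (hδ : 0 < δ) (hl : 0 < l)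
    {g : EuclideanSpace ℝ (Fin (m + 1)) → ℂ}
    (hsym : ∀ t ∈ Icc (0 : ℝ) π, ∀ θ : EuclideanSpace ℝ (Fin m), ‖θ‖ = 1 →
        g (WithLp.toLp 2 (Fin.cons (cos t) (fun i => sin t * θ i) : Fin (m + 1) → ℝ)) =
          g (WithLp.toLp 2 (Fin.cons 0 (fun i => θ i) : Fin (m + 1) → ℝ)))
    {ω : EuclideanSpace ℝ (Fin (m + 1))} (hω1 : ‖ω‖ = 1)
    (hω : l < ‖euclideanTail m ω‖ ^ (-δ) * ‖g ω‖) {c : ℝ} (hc : c ∈ Ioo (0 : ℝ) 1) :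
    c • euclideanTail m ω ∈ {y : EuclideanSpace ℝ (Fin m) | y ≠ 0 ∧
      ‖y‖ < (‖g (WithLp.toLp 2 (Fin.cons 0 (fun i => (‖y‖⁻¹ • y) i) : Fin (m + 1) → ℝ))‖ / l)
        ^ δ⁻¹} := by
  set w := euclideanTail m ω
  have hw : w ≠ 0 := by
    intro hw0
    rw [hw0, norm_zero, zero_rpow (neg_ne_zero.2 hδ.ne'), zero_mul] at hω
    exact hl.not_gt hω
  have hw0 : 0 < ‖w‖ := norm_pos_iff.2 hw
  rw [apply_eq_apply_cons_zero_of_norm_eq_one hsym hω1 hw] at hω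
  have hnorm : ‖c • w‖ = c * ‖w‖ := by rw [norm_smul, Real.norm_of_nonneg hc.1.le]
  have hdir : ‖c • w‖⁻¹ • (c • w) = ‖w‖⁻¹ • w := by
    rw [hnorm, smul_smul, mul_inv_rev, mul_assoc, inv_mul_cancel₀ hc.1.ne', mul_one]
  refine ⟨smul_ne_zero hc.1.ne' hw, ?_⟩
  rw [hdir, hnorm]
  exact (mul_lt_of_lt_one_left hw0 hc.2).trans (lt_rpow_inv_of_lt_rpow_neg_mul hw0 hl hδ hω)

theorem toSphere_setOf_lt_rpow_neg_mul_le (m : ℕ) [NeZero m] {δ l : ℝ} (hδ : 0 < δ) (hl : 0 < l)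
    {g : EuclideanSpace ℝ (Fin (m + 1)) → ℂ} (hg : Measurable g)
    (hsym : ∀ t ∈ Icc (0 : ℝ) π, ∀ θ : EuclideanSpace ℝ (Fin m), ‖θ‖ = 1 →
        g (WithLp.toLp 2 (Fin.cons (cos t) (fun i => sin t * θ i) : Fin (m + 1) → ℝ)) =
          g (WithLp.toLp 2 (Fin.cons 0 (fun i => θ i) : Fin (m + 1) → ℝ))) :
    (volume : Measure (EuclideanSpace ℝ (Fin (m + 1)))).toSphere
        {ω : sphere (0 : EuclideanSpace ℝ (Fin (m + 1))) 1 |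
          l < ‖euclideanTail m (ω : EuclideanSpace ℝ (Fin (m + 1)))‖ ^ (-δ) *
            ‖g (ω : EuclideanSpace ℝ (Fin (m + 1)))‖} ≤
      ENNReal.ofReal (2 * (m + 1) / m / l ^ (m / δ)) *
        ∫⁻ θ : sphere (0 : EuclideanSpace ℝ (Fin m)) 1,
          ENNReal.ofReal
              ‖g (WithLp.toLp 2 (Fin.cons 0 (fun i => (θ : EuclideanSpace ℝ (Fin m)) i) :
                Fin (m + 1) → ℝ))‖ ^ (m / δ)
            ∂(volume : Measure (EuclideanSpace ℝ (Fin m))).toSphere := by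
  have hm : (0 : ℝ) < m := Nat.cast_pos.2 (NeZero.pos m)
  set G : EuclideanSpace ℝ (Fin m) → ℝ :=
    fun y => ‖g (WithLp.toLp 2 (Fin.cons 0 (fun i => y i) : Fin (m + 1) → ℝ))‖
  have hG : Measurable G := by fun_prop
  have hB : MeasurableSet {y | y ≠ 0 ∧ ‖y‖ < (G (‖y‖⁻¹ • y) / l) ^ δ⁻¹} :=
    (measurableSet_singleton 0).compl.inter (measurableSet_lt measurable_norm (by fun_prop))
  have hS : MeasurableSet {ω : sphere (0 : EuclideanSpace ℝ (Fin (m + 1))) 1 |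
      l < ‖euclideanTail m (ω : EuclideanSpace ℝ (Fin (m + 1)))‖ ^ (-δ) *
        ‖g (ω : EuclideanSpace ℝ (Fin (m + 1)))‖} :=
    measurableSet_lt measurable_const (by fun_prop)
  calc _ ≤ 2 * (m + 1) * volume {y | y ≠ 0 ∧ ‖y‖ < (G (‖y‖⁻¹ • y) / l) ^ δ⁻¹} :=
        toSphere_le_of_forall_smul_euclideanTail_mem m hS hB fun ω hω c hc =>
          smul_euclideanTail_mem_of_lt_rpow_neg_mul hδ hl hsym (norm_eq_of_mem_sphere ω) hω hc
    _ = 2 * (m + 1) * (ENNReal.ofReal ((m * l ^ (m / δ))⁻¹) *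
          ∫⁻ θ : sphere (0 : EuclideanSpace ℝ (Fin m)) 1, ENNReal.ofReal (G θ) ^ (m / δ)
            ∂(volume : Measure (EuclideanSpace ℝ (Fin m))).toSphere) := by
        rw [Measure.addHaar_setOf_norm_lt_div_rpow_inv _ hG (fun _ => norm_nonneg _) hδ hl,
          finrank_euclideanSpace_fin]
    _ = _ := by
        rw [← mul_assoc, show 2 * (m + 1) / m / l ^ (m / δ) = 2 * (m + 1) * (m * l ^ (m / δ))⁻¹
          by ring, ENNReal.ofReal_mul (by positivity)]
        norm_cast

theorem weak_bound_for_radial_extension_general (m : ℕ) (hm : 1 ≤ m) (α : ℝ)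
    (hαn : α < (m : ℝ) + 1) :
    ∃ C : ℝ≥0∞, C < ⊤ ∧
      ∀ g : EuclideanSpace ℝ (Fin (m + 1)) → ℂ, Measurable g →
      (∀ t ∈ Icc (0 : ℝ) π, ∀ ω' : EuclideanSpace ℝ (Fin m), ‖ω'‖ = 1 →
        g (WithLp.toLp 2 (Fin.cons (Real.cos t) (fun i => Real.sin t * ω' i) : Fin (m + 1) → ℝ)) =
          g (WithLp.toLp 2 (Fin.cons 0 (fun i => ω' i) : Fin (m + 1) → ℝ))) →
      ∀ l : ℝ, 0 < l →
        ENNReal.ofReal l *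
            ((volume : Measure (EuclideanSpace ℝ (Fin (m + 1)))).toSphere
              {ω : Metric.sphere (0 : EuclideanSpace ℝ (Fin (m + 1))) 1 |
                l < ‖euclideanTail m (ω : EuclideanSpace ℝ (Fin (m + 1)))‖
                      ^ (α - ((m : ℝ) + 1)) *
                    ‖g (ω : EuclideanSpace ℝ (Fin (m + 1)))‖})
              ^ (((m : ℝ) + 1 - α) / m)
          ≤ C * (∫⁻ ω' : Metric.sphere (0 : EuclideanSpace ℝ (Fin m)) 1,
                ENNReal.ofReal
                    ‖g (WithLp.toLp 2 (Fin.cons 0 (fun i => (ω' : EuclideanSpace ℝ (Fin m)) i) : Fin (m + 1) → ℝ))‖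
                  ^ ((m : ℝ) / ((m : ℝ) + 1 - α))
                ∂((volume : Measure (EuclideanSpace ℝ (Fin m))).toSphere))
              ^ (((m : ℝ) + 1 - α) / m) := by
  have : NeZero m := ⟨by omega⟩
  have hδ : 0 < (m : ℝ) + 1 - α := sub_pos.2 hαn
  have hm0 : (0 : ℝ) < m := by exact_mod_cast hm
  refine ⟨ENNReal.ofReal ((2 * (m + 1) / m) ^ (((m : ℝ) + 1 - α) / m)), ENNReal.ofReal_lt_top,
    fun g hg hsym l hl => ?_⟩
  have hlevel := toSphere_setOf_lt_rpow_neg_mul_le m hδ hl hg hsym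
  rw [neg_sub] at hlevel
  exact ENNReal.ofReal_mul_rpow_le_of_le_ofReal_div_rpow_mul (by positivity) hl (by positivity)
    (by field_simp) hlevel

/-- Let `n = m+1 ≥ 2`, `1 < α < n`, and let `g` on `S^{n-1}` satisfy
`g(cos t, (sin t)ω̃) = g(0, ω̃)`. Then `ω ↦ |ω'|^{α-n} g(ω)` lies in weak
`L^{(n-1)/(n-α)}(S^{n-1})` with norm at most
`C (∫_{S^{n-2}} |g(0,ω̃)|^{(n-1)/(n-α)} dω̃)^{(n-α)/(n-1)}`, `C = C(n,α)`. -/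
theorem weak_bound_for_radial_extension (m : ℕ) (hm : 1 ≤ m) (α : ℝ)
    (hα1 : 1 < α) (hαn : α < (m : ℝ) + 1) :
    ∃ C : ℝ≥0∞, C < ⊤ ∧
      ∀ g : EuclideanSpace ℝ (Fin (m + 1)) → ℂ, Measurable g →
      (∀ t ∈ Icc (0 : ℝ) π, ∀ ω' : EuclideanSpace ℝ (Fin m), ‖ω'‖ = 1 →
        g (WithLp.toLp 2 (Fin.cons (Real.cos t) (fun i => Real.sin t * ω' i) : Fin (m + 1) → ℝ)) =
          g (WithLp.toLp 2 (Fin.cons 0 (fun i => ω' i) : Fin (m + 1) → ℝ))) →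
      ∀ l : ℝ, 0 < l →
        ENNReal.ofReal l *
            ((volume : Measure (EuclideanSpace ℝ (Fin (m + 1)))).toSphere
              {ω : Metric.sphere (0 : EuclideanSpace ℝ (Fin (m + 1))) 1 |
                l < ‖euclideanTail m (ω : EuclideanSpace ℝ (Fin (m + 1)))‖
                      ^ (α - ((m : ℝ) + 1)) *
                    ‖g (ω : EuclideanSpace ℝ (Fin (m + 1)))‖})
              ^ (((m : ℝ) + 1 - α) / m)
          ≤ C * (∫⁻ ω' : Metric.sphere (0 : EuclideanSpace ℝ (Fin m)) 1,
                ENNReal.ofReal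
                    ‖g (WithLp.toLp 2 (Fin.cons 0 (fun i => (ω' : EuclideanSpace ℝ (Fin m)) i) : Fin (m + 1) → ℝ))‖
                  ^ ((m : ℝ) / ((m : ℝ) + 1 - α))
                ∂((volume : Measure (EuclideanSpace ℝ (Fin m))).toSphere))
              ^ (((m : ℝ) + 1 - α) / m) :=
  weak_bound_for_radial_extension_general m hm α hαn
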